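/- Let s > 0 and let (y_t, u_t, v_t) be any differentiable solution on an interval of the system y' = s y(1−y)/(y+(1+s)(1−y)), u' = u/2 + (u+v)y/2 − u/(y+(1+s)(1−y)), v' = v/2 + (u+v)(1−y)/2 − (1+s)v/(y+(1+s)(1−y)) with y_t ∈ (0,1). Then d/dt (u_t/y_t) = (u_t+v_t)/2 − u_t/(2 y_t) and d/dt (v_t/(1−y_t)) = (u_t+v_t)/2 − v_t/(2(1−y_t)). -/

import Mathlib

/-! Writing `D = y + (1+s)(1-y) = 1 + s(1-y)`, the quotient rule gives
`(u/y)' = u'/y - u s (1-y)/(y D)`, and the two terms carrying `1/D` combine to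
`-u (1 + s(1-y))/(y D) = -u/y`; the same cancellation happens for `v/(1-y)`. -/

/-- The drift function `g` of the dynamical system
`y' = s y(1−y)/(y+(1+s)(1−y))`,
`u' = u/2 + (u+v)y/2 − u/(y+(1+s)(1−y))`,
`v' = v/2 + (u+v)(1−y)/2 − (1+s)v/(y+(1+s)(1−y))`. -/
noncomputable def gdrift (s : ℝ) (p : ℝ × ℝ × ℝ) : ℝ × ℝ × ℝ :=
  (s * p.1 * (1 - p.1) / (p.1 + (1 + s) * (1 - p.1)),
   p.2.1 / 2 + (p.2.1 + p.2.2) * p.1 / 2 - p.2.1 / (p.1 + (1 + s) * (1 - p.1)),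
   p.2.2 / 2 + (p.2.1 + p.2.2) * (1 - p.1) / 2 -
     (1 + s) * p.2.2 / (p.1 + (1 + s) * (1 - p.1)))

section ProdComponents

variable {𝕜 F G : Type*} [NontriviallyNormedField 𝕜] [NormedAddCommGroup F] [NormedSpace 𝕜 F]
  [NormedAddCommGroup G] [NormedSpace 𝕜 G] {f : 𝕜 → F × G} {f' : F × G} {s : Set 𝕜} {x : 𝕜}

theorem HasDerivWithinAt.fst (h : HasDerivWithinAt f f' s x) :
    HasDerivWithinAt (fun t => (f t).1) f'.1 s x :=
  (ContinuousLinearMap.fst 𝕜 F G).hasFDerivAt.comp_hasDerivWithinAt x h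

theorem HasDerivWithinAt.snd (h : HasDerivWithinAt f f' s x) :
    HasDerivWithinAt (fun t => (f t).2) f'.2 s x :=
  (ContinuousLinearMap.snd 𝕜 F G).hasFDerivAt.comp_hasDerivWithinAt x h

end ProdComponents

section Gdrift

variable {s : ℝ} {p : ℝ × ℝ × ℝ}

theorem gdrift_denom_pos (hs : 0 ≤ s) (hy : p.1 ≤ 1) : 0 < p.1 + (1 + s) * (1 - p.1) := by
  nlinarith

theorem gdrift_quotient_deriv_fst (hy : p.1 ≠ 0) (hD : p.1 + (1 + s) * (1 - p.1) ≠ 0) :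
    ((gdrift s p).2.1 * p.1 - p.2.1 * (gdrift s p).1) / p.1 ^ 2 =
      (p.2.1 + p.2.2) / 2 - p.2.1 / (2 * p.1) := by
  simp only [gdrift]
  -- an atom `D` keeps `field_simp` from reordering the denominator out of reach of `hD`
  generalize hDdef : p.1 + (1 + s) * (1 - p.1) = D at hD ⊢
  field_simp
  rw [← hDdef]
  ring

theorem gdrift_quotient_deriv_snd (hy : 1 - p.1 ≠ 0) (hD : p.1 + (1 + s) * (1 - p.1) ≠ 0) :
    ((gdrift s p).2.2 * (1 - p.1) - p.2.2 * -(gdrift s p).1) / (1 - p.1) ^ 2 =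
      (p.2.1 + p.2.2) / 2 - p.2.2 / (2 * (1 - p.1)) := by
  simp only [gdrift]
  generalize hDdef : p.1 + (1 + s) * (1 - p.1) = D at hD ⊢
  field_simp
  rw [← hDdef]
  ring

end Gdrift

theorem dynamical_system_quotient_derivatives
    (s : ℝ) (hs : 0 < s) (I : Set ℝ)
    (z : ℝ → ℝ × ℝ × ℝ)
    (hy : ∀ t ∈ I, (z t).1 ∈ Set.Ioo (0 : ℝ) 1)
    (hz : ∀ t ∈ I, HasDerivWithinAt z (gdrift s (z t)) I t) :
    ∀ t ∈ I,
      HasDerivWithinAt (fun τ => (z τ).2.1 / (z τ).1)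
        (((z t).2.1 + (z t).2.2) / 2 - (z t).2.1 / (2 * (z t).1)) I t ∧
      HasDerivWithinAt (fun τ => (z τ).2.2 / (1 - (z τ).1))
        (((z t).2.1 + (z t).2.2) / 2 - (z t).2.2 / (2 * (1 - (z t).1))) I t := by
  intro t ht
  obtain ⟨hy0, hy1⟩ := hy t ht
  have hD := (gdrift_denom_pos hs.le hy1.le).ne'
  have hdy : HasDerivWithinAt (fun τ => (z τ).1) (gdrift s (z t)).1 I t := (hz t ht).fst
  have hdu : HasDerivWithinAt (fun τ => (z τ).2.1) (gdrift s (z t)).2.1 I t := (hz t ht).snd.fst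
  have hdv : HasDerivWithinAt (fun τ => (z τ).2.2) (gdrift s (z t)).2.2 I t := (hz t ht).snd.snd
  have hy1ne : 1 - (z t).1 ≠ 0 := by linarith
  exact ⟨(hdu.fun_div hdy hy0.ne').congr_deriv (gdrift_quotient_deriv_fst hy0.ne' hD),
    (hdv.fun_div (hdy.const_sub 1) hy1ne).congr_deriv (gdrift_quotient_deriv_snd hy1ne hD)⟩
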